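/- Let Σ_x and Σ̃_e be m × m real symmetric positive definite matrices with all diagonal entries equal to 1. Let B = diag(b₁, …, b_m) and L = diag(l₁, …, l_m) with b_i ∈ [−1, 1], l_i > 0, and b_i² + l_i² = 1 for all i. Suppose there exist indices i, j such that (b_i ≠ 0 or b_j ≠ 0) and |(Σ̃_e)_{ij}| ≠ |(Σ_x)_{ij}|. Then L Σ̃_e B ≠ B Σ_x L, and consequently J(B, L) > 0. -/

import Mathlib

/-!
With `Q = [[B, L], [L, -B]]`, a symmetric orthogonal matrix, conjugation gives
`Q · diag(Σx, Σe) · Q = [[M, C], [Cᵀ, N]]` where `M = BΣxB + LΣeL`, `N = LΣxL + BΣeB` and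
`C = BΣxL - LΣeB`. This block matrix is positive definite with determinant `det Σx · det Σe`, so
`J(B, L) = log det M + log det N - log det [[M, C], [Cᵀ, N]]`, which is positive by the strict
Fischer inequality: for `C ≠ 0` the Schur complement `N - CᵀM⁻¹C` is `N` minus a nonzero positive
semidefinite matrix, hence has determinant `< det N`. Finally `C ≠ 0`, since comparing the `(i, j)`
and `(j, i)` entries of `LΣeB = BΣxL` forces `|(Σe)ᵢⱼ| = |(Σx)ᵢⱼ|` whenever `bᵢ` or `bⱼ` is nonzero.
-/

open Matrix

lemma abs_eq_abs_of_mul_eq_mul_swap {K : Type*} [Field K] [LinearOrder K] [IsStrictOrderedRing K]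
    {u v e x : K} (huv : u ≠ 0 ∨ v ≠ 0) (h₁ : v * e = u * x) (h₂ : u * e = v * x) :
    |e| = |x| := by
  rw [abs_eq_abs]
  by_contra! hne
  have hsum : (u + v) * (e - x) = 0 := by linear_combination h₁ + h₂
  have hdiff : (u - v) * (e + x) = 0 := by linear_combination h₂ - h₁
  have hadd : u + v = 0 := (mul_eq_zero.mp hsum).resolve_right (sub_ne_zero.mpr hne.1)
  have hsub : u - v = 0 := (mul_eq_zero.mp hdiff).resolve_right
    fun h ↦ hne.2 (eq_neg_of_add_eq_zero_left h)
  rcases huv with huv | huv <;> exact huv (by linarith)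

namespace Matrix

section Blocks

variable {m n R : Type*} [Ring R] [PartialOrder R] [StarRing R]

lemma PosDef.toBlocks₁₁ {M : Matrix (m ⊕ n) (m ⊕ n) R} (hM : M.PosDef) : M.toBlocks₁₁.PosDef :=
  hM.submatrix Sum.inl_injective

lemma PosDef.toBlocks₂₂ {M : Matrix (m ⊕ n) (m ⊕ n) R} (hM : M.PosDef) : M.toBlocks₂₂.PosDef :=
  hM.submatrix Sum.inr_injective

end Blocks

section BlockReflection

variable {n R : Type*} [DecidableEq n] [CommRing R]

def blockReflection (b l : n → R) : Matrix (n ⊕ n) (n ⊕ n) R :=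
  fromBlocks (diagonal b) (diagonal l) (diagonal l) (-diagonal b)

lemma blockReflection_transpose (b l : n → R) : (blockReflection b l)ᵀ = blockReflection b l := by
  simp [blockReflection, fromBlocks_transpose]

variable [Fintype n]

lemma blockReflection_mul_self {b l : n → R} (h : ∀ i, b i ^ 2 + l i ^ 2 = 1) :
    blockReflection b l * blockReflection b l = 1 := by
  have hsq : diagonal b * diagonal b + diagonal l * diagonal l = (1 : Matrix n n R) := by
    rw [diagonal_mul_diagonal, diagonal_mul_diagonal, diagonal_add, ← diagonal_one]
    exact congrArg diagonal (funext fun i ↦ by linear_combination h i)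
  have hcomm : diagonal l * diagonal b = diagonal b * diagonal l := by
    simp [diagonal_mul_diagonal, mul_comm]
  rw [blockReflection, fromBlocks_multiply, ← fromBlocks_one]
  simp only [Matrix.mul_neg, Matrix.neg_mul, neg_neg, hcomm, add_neg_cancel, hsq]
  rw [add_comm, hsq]

lemma det_blockReflection_mul_mul_blockReflection {b l : n → R} (h : ∀ i, b i ^ 2 + l i ^ 2 = 1)
    (P : Matrix (n ⊕ n) (n ⊕ n) R) :
    (blockReflection b l * P * blockReflection b l).det = P.det := by
  rw [det_mul_comm, ← Matrix.mul_assoc, blockReflection_mul_self h, Matrix.one_mul]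

lemma blockReflection_mul_fromBlocks_mul (b l : n → R) (X Y : Matrix n n R) :
    blockReflection b l * fromBlocks X 0 0 Y * blockReflection b l =
      fromBlocks (diagonal b * X * diagonal b + diagonal l * Y * diagonal l)
        (diagonal b * X * diagonal l - diagonal l * Y * diagonal b)
        (diagonal l * X * diagonal b - diagonal b * Y * diagonal l)
        (diagonal l * X * diagonal l + diagonal b * Y * diagonal b) := by
  simp only [blockReflection, fromBlocks_multiply]
  congr 1 <;> noncomm_ring

end BlockReflection

variable {m n : Type*} [Fintype m] [Fintype n] [DecidableEq n]

lemma PosSemidef.one_lt_det_one_add {T : Matrix n n ℝ} (hT : T.PosSemidef) (hT0 : T ≠ 0) :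
    1 < (1 + T).det := by
  set d := hT.1.eigenvalues
  obtain ⟨i, hi⟩ : ∃ i, d i ≠ 0 := by
    by_contra! h
    exact hT0 (hT.1.eigenvalues_eq_zero_iff.mp (funext h))
  have hdet : (1 + T).det = ∏ j, (1 + d j) := by
    set U := hT.1.eigenvectorUnitary
    have hspec : T = (U : Matrix n n ℝ) * diagonal (RCLike.ofReal ∘ d) * (star U : Matrix n n ℝ) :=
      hT.1.spectral_theorem
    have h1 : (1 : Matrix n n ℝ) = (U : Matrix n n ℝ) * 1 * (star U : Matrix n n ℝ) := by simp
    conv_lhs => rw [hspec, h1, ← Matrix.add_mul, ← Matrix.mul_add, det_mul_comm, ← Matrix.mul_assoc,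
      Unitary.coe_star_mul_self, Matrix.one_mul, ← diagonal_one, diagonal_add, det_diagonal]
    simp [d]
  rw [hdet]
  calc (1 : ℝ) = ∏ _j : n, 1 := Finset.prod_const_one.symm
    _ < ∏ j, (1 + d j) :=
      Finset.prod_lt_prod (fun _ _ ↦ one_pos) (fun j _ ↦ by simpa using hT.eigenvalues_nonneg j)
        ⟨i, Finset.mem_univ i, by simpa using (hT.eigenvalues_nonneg i).lt_of_ne' hi⟩

open scoped MatrixOrder in
lemma PosDef.det_lt_det_add {A S : Matrix n n ℝ} (hA : A.PosDef) (hS : S.PosSemidef) (hS0 : S ≠ 0) :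
    A.det < (A + S).det := by
  set R := CFC.sqrt A
  have hRR : R * R = A := CFC.sqrt_mul_sqrt_self A hA.posSemidef.nonneg
  have hRH : Rᴴ = R := (CFC.sqrt_nonneg A).posSemidef.1
  have hR : IsUnit R := by
    rw [isUnit_iff_isUnit_det, isUnit_iff_ne_zero]
    intro h
    simpa [← hRR, h] using hA.det_pos
  set T := (R⁻¹)ᴴ * S * R⁻¹
  have hT : T.PosSemidef := hS.conjTranspose_mul_mul_same R⁻¹
  have hRTR : R * T * R = S := by
    simp only [T, conjTranspose_nonsing_inv, hRH]
    rw [← Matrix.mul_assoc, ← Matrix.mul_assoc, mul_nonsing_inv _ ((isUnit_iff_isUnit_det R).mp hR),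
      Matrix.one_mul, Matrix.mul_assoc, nonsing_inv_mul _ ((isUnit_iff_isUnit_det R).mp hR),
      Matrix.mul_one]
  have hT0 : T ≠ 0 := by
    intro h
    exact hS0 (by rw [← hRTR, h, Matrix.mul_zero, Matrix.zero_mul])
  have hAS : A + S = R * (1 + T) * R := by
    rw [← hRR, ← hRTR]; noncomm_ring
  calc A.det = A.det * 1 := (mul_one _).symm
    _ < A.det * (1 + T).det := mul_lt_mul_of_pos_left (hT.one_lt_det_one_add hT0) hA.det_pos
    _ = (A + S).det := by rw [hAS, det_mul, det_mul, ← hRR, det_mul]; ring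

lemma PosDef.eq_zero_of_conjTranspose_mul_mul_eq_zero {R : Type*} [CommRing R] [PartialOrder R]
    [StarRing R] {P : Matrix m m R} (hP : P.PosDef) {B : Matrix m n R} (h : Bᴴ * P * B = 0) :
    B = 0 := by
  ext i j
  suffices hcol : B *ᵥ Pi.single j 1 = 0 by simpa [mulVec_single] using congrFun hcol i
  by_contra hne
  have := hP.dotProduct_mulVec_pos hne
  rw [star_mulVec, dotProduct_mulVec, vecMul_vecMul, ← dotProduct_mulVec, mulVec_mulVec, h] at this
  simp at this

lemma PosDef.det_fromBlocks_lt [DecidableEq m] {A : Matrix m m ℝ} {B : Matrix m n ℝ}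
    {D : Matrix n n ℝ} (h : (fromBlocks A B Bᴴ D).PosDef) (hB : B ≠ 0) :
    (fromBlocks A B Bᴴ D).det < A.det * D.det := by
  have hA : A.PosDef := by simpa using h.toBlocks₁₁
  let _ : Invertible A := hA.isUnit.invertible
  set S := Bᴴ * A⁻¹ * B
  have hdet : (fromBlocks A B Bᴴ D).det = A.det * (D - S).det := by
    rw [det_fromBlocks₁₁, invOf_eq_nonsing_inv]
  have hschur : (D - S).PosDef := by
    refine ((PosDef.fromBlocks₁₁ B D hA).mp h.posSemidef).posDef_iff_det_ne_zero.mpr ?_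
    have := h.det_pos
    rw [hdet] at this
    exact (pos_of_mul_pos_right this hA.det_pos.le).ne'
  have hS : S.PosSemidef := hA.inv.posSemidef.conjTranspose_mul_mul_same B
  have hS0 : S ≠ 0 := fun h0 ↦ hB (hA.inv.eq_zero_of_conjTranspose_mul_mul_eq_zero h0)
  rw [hdet]
  gcongr
  · exact hA.det_pos
  · simpa using hschur.det_lt_det_add hS hS0

lemma PosDef.fromBlocks_zero [DecidableEq m] {A : Matrix m m ℝ} {D : Matrix n n ℝ} (hA : A.PosDef)
    (hD : D.PosDef) : (fromBlocks A 0 0 D).PosDef := by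
  let _ : Invertible A := hA.isUnit.invertible
  have hpsd : (fromBlocks A 0 0 D).PosSemidef := by
    simpa using (PosDef.fromBlocks₁₁ (0 : Matrix m n ℝ) D hA).mpr (by simpa using hD.posSemidef)
  refine hpsd.posDef_iff_det_ne_zero.mpr ?_
  rw [det_fromBlocks_zero₂₁]
  exact (mul_pos hA.det_pos hD.det_pos).ne'

lemma diagonal_mul_mul_diagonal_ne {K : Type*} [Field K] [LinearOrder K] [IsStrictOrderedRing K]
    {X Y : Matrix n n K} (hX : X.IsSymm) (hY : Y.IsSymm) {b l : n → K} (hl : ∀ i, l i ≠ 0)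
    {i j : n} (hb : b i ≠ 0 ∨ b j ≠ 0) (hXY : |Y i j| ≠ |X i j|) :
    diagonal l * Y * diagonal b ≠ diagonal b * X * diagonal l := by
  intro h
  have hij : l i * Y i j * b j = b i * X i j * l j := by
    simpa [diagonal_mul, mul_diagonal] using congrFun₂ h i j
  have hji : l j * Y j i * b i = b j * X j i * l i := by
    simpa [diagonal_mul, mul_diagonal] using congrFun₂ h j i
  rw [hX.apply, hY.apply] at hji
  refine hXY (abs_eq_abs_of_mul_eq_mul_swap (u := b i * l j) (v := b j * l i) ?_ ?_ ?_)
  · rcases hb with hb | hb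
    exacts [.inl (mul_ne_zero hb (hl j)), .inr (mul_ne_zero hb (hl i))]
  · linear_combination hij
  · linear_combination hji

lemma PosDef.blockReflection_mul_fromBlocks_mul {b l : n → ℝ} (h : ∀ i, b i ^ 2 + l i ^ 2 = 1)
    {X Y : Matrix n n ℝ} (hX : X.PosDef) (hY : Y.PosDef) :
    (blockReflection b l * fromBlocks X 0 0 Y * blockReflection b l).PosDef := by
  have hQ : IsUnit (blockReflection b l) := .of_mul_eq_one _ (blockReflection_mul_self h)
  have hstar : star (blockReflection b l) = blockReflection b l := by
    rw [star_eq_conjTranspose, conjTranspose_eq_transpose_of_trivial, blockReflection_transpose]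
  simpa [hstar] using
    (IsUnit.posDef_star_left_conjugate_iff hQ).mpr (PosDef.fromBlocks_zero hX hY)

end Matrix

theorem stmt10_general {m : ℕ} (Sx Se : Matrix (Fin m) (Fin m) ℝ)
    (hx : Sx.PosDef) (he : Se.PosDef)
    (b l : Fin m → ℝ)
    (hl : ∀ i, 0 < l i)
    (hbl : ∀ i, b i ^ 2 + l i ^ 2 = 1)
    (hdiv : ∃ i j : Fin m, (b i ≠ 0 ∨ b j ≠ 0) ∧ |Se i j| ≠ |Sx i j|) :
    Matrix.diagonal l * Se * Matrix.diagonal b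
        ≠ Matrix.diagonal b * Sx * Matrix.diagonal l
    ∧ 0 < - Real.log Sx.det - Real.log Se.det
        + Real.log (Matrix.diagonal b * Sx * Matrix.diagonal b
            + Matrix.diagonal l * Se * Matrix.diagonal l).det
        + Real.log (Matrix.diagonal l * Sx * Matrix.diagonal l
            + Matrix.diagonal b * Se * Matrix.diagonal b).det := by
  have hSx : Sx.IsSymm := IsSymm.ext fun i j ↦ by simpa using hx.isHermitian.apply i j
  have hSe : Se.IsSymm := IsSymm.ext fun i j ↦ by simpa using he.isHermitian.apply i j
  obtain ⟨i, j, hb, hij⟩ := hdiv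
  have hne := diagonal_mul_mul_diagonal_ne hSx hSe (fun i ↦ (hl i).ne') hb hij
  refine ⟨hne, ?_⟩
  set M := diagonal b * Sx * diagonal b + diagonal l * Se * diagonal l
  set N := diagonal l * Sx * diagonal l + diagonal b * Se * diagonal b
  set C := diagonal b * Sx * diagonal l - diagonal l * Se * diagonal b
  have hblock : blockReflection b l * fromBlocks Sx 0 0 Se * blockReflection b l =
      fromBlocks M C Cᴴ N := by
    rw [blockReflection_mul_fromBlocks_mul]
    congr 1
    simp [C, Matrix.mul_assoc, hSx.eq, hSe.eq]
  have hPD : (fromBlocks M C Cᴴ N).PosDef := hblock ▸ hx.blockReflection_mul_fromBlocks_mul hbl he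
  have hdet : (fromBlocks M C Cᴴ N).det = Sx.det * Se.det := by
    rw [← hblock, det_blockReflection_mul_mul_blockReflection hbl, det_fromBlocks_zero₂₁]
  have hM : M.PosDef := by simpa using hPD.toBlocks₁₁
  have hN : N.PosDef := by simpa using hPD.toBlocks₂₂
  have hlt : Sx.det * Se.det < M.det * N.det :=
    hdet ▸ hPD.det_fromBlocks_lt (sub_ne_zero.mpr hne.symm)
  have hlog := Real.log_lt_log (mul_pos hx.det_pos he.det_pos) hlt
  rw [Real.log_mul hx.det_pos.ne' he.det_pos.ne',
    Real.log_mul hM.det_pos.ne' hN.det_pos.ne'] at hlog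
  linarith

theorem stmt10 {m : ℕ} (Sx Se : Matrix (Fin m) (Fin m) ℝ)
    (hx : Sx.PosDef) (he : Se.PosDef)
    (hxd : ∀ i, Sx i i = 1) (hed : ∀ i, Se i i = 1)
    (b l : Fin m → ℝ)
    (hb : ∀ i, b i ∈ Set.Icc (-1 : ℝ) 1) (hl : ∀ i, 0 < l i)
    (hbl : ∀ i, b i ^ 2 + l i ^ 2 = 1)
    (hdiv : ∃ i j : Fin m, (b i ≠ 0 ∨ b j ≠ 0) ∧ |Se i j| ≠ |Sx i j|) :
    Matrix.diagonal l * Se * Matrix.diagonal b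
        ≠ Matrix.diagonal b * Sx * Matrix.diagonal l
    ∧ 0 < - Real.log Sx.det - Real.log Se.det
        + Real.log (Matrix.diagonal b * Sx * Matrix.diagonal b
            + Matrix.diagonal l * Se * Matrix.diagonal l).det
        + Real.log (Matrix.diagonal l * Sx * Matrix.diagonal l
            + Matrix.diagonal b * Se * Matrix.diagonal b).det :=
  stmt10_general Sx Se hx he b l hl hbl hdiv
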